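/- arXiv:1906.00105 — 3 statements merged into one kernel-verified Lean document; each statement's English description precedes it below -/
import Mathlib

section
/- Let D ⊆ ℝ^m, let L ∈ ℝ^{m×m}, and let f ∈ 𝓛(D, L). Suppose f is differentiable at a point x in the interior of D with gradient ∇f(x). Then for every p ∈ ℝ^m, (pᵀ∇f(x))² ≤ pᵀ LᵀL p; equivalently, the matrix LᵀL − ∇f(x)∇f(x)ᵀ is positive semidefinite. -/
open Matrix

/-- The matrix-vector product as a map on Euclidean space,
so that `‖mulVecE L v‖` is the Euclidean 2-norm of `L v`. -/
noncomputable def mulVecE {m : ℕ} (L : Matrix (Fin m) (Fin m) ℝ)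
    (v : EuclideanSpace ℝ (Fin m)) : EuclideanSpace ℝ (Fin m) :=
  Matrix.toEuclideanCLM (𝕜 := ℝ) L v

/-- The Lipschitz-matrix class `𝓛(D, L)`. -/
def MemLip {m : ℕ} (D : Set (EuclideanSpace ℝ (Fin m))) (L : Matrix (Fin m) (Fin m) ℝ)
    (f : EuclideanSpace ℝ (Fin m) → ℝ) : Prop :=
  ∀ x₁ ∈ D, ∀ x₂ ∈ D, |f x₁ - f x₂| ≤ ‖mulVecE L (x₁ - x₂)‖
open scoped RealInnerProductSpace

/-- Directional derivative bound: `|⟪p, g⟫| ≤ ‖L p‖` for every direction `p`. -/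
lemma dir_bound_aux {m : ℕ} (D : Set (EuclideanSpace ℝ (Fin m)))
    (L : Matrix (Fin m) (Fin m) ℝ) (f : EuclideanSpace ℝ (Fin m) → ℝ)
    (hf : MemLip D L f) (x : EuclideanSpace ℝ (Fin m)) (hx : x ∈ interior D)
    (g : EuclideanSpace ℝ (Fin m)) (hg : HasGradientAt f g x)
    (p : EuclideanSpace ℝ (Fin m)) : |⟪p, g⟫| ≤ ‖mulVecE L p‖ := by
  have hline : HasDerivAt (fun t : ℝ => x + t • p) p 0 := by
    simpa using ((hasDerivAt_id (0:ℝ)).smul_const p).const_add x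
  have hx' : HasFDerivAt f ((InnerProductSpace.toDual ℝ _) g) ((fun t : ℝ => x + t • p) 0) := by
    simpa using hg.hasFDerivAt
  have hφ : HasDerivAt (fun t : ℝ => f (x + t • p)) ⟪p, g⟫ 0 := by
    have := hx'.comp_hasDerivAt 0 hline
    have heq : ⟪p, g⟫ = ⟪g, p⟫ := real_inner_comm _ _
    rw [heq]
    simp only [InnerProductSpace.toDual_apply_apply] at this
    exact this
  have hmem : ∀ᶠ t : ℝ in nhds 0, x + t • p ∈ D := by
    have hc : Continuous (fun t : ℝ => x + t • p) := by continuity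
    have h0 : x + (0:ℝ) • p ∈ interior D := by simpa using hx
    have := (hc.continuousAt (x := (0:ℝ))).eventually_mem
      (isOpen_interior.mem_nhds h0)
    exact this.mono fun t ht => interior_subset ht
  have hslope : ∀ᶠ t : ℝ in nhdsWithin 0 {(0:ℝ)}ᶜ,
      |slope (fun t : ℝ => f (x + t • p)) 0 t| ≤ ‖mulVecE L p‖ := by
    filter_upwards [nhdsWithin_le_nhds hmem, self_mem_nhdsWithin] with t ht ht0
    have hx0 : x ∈ D := interior_subset hx
    have hlip := hf _ ht _ hx0
    simp only [add_sub_cancel_left] at hlip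
    have hL : ‖mulVecE L (t • p)‖ = |t| * ‖mulVecE L p‖ := by
      simp [mulVecE, norm_smul]
    rw [hL] at hlip
    have ht0' : (t:ℝ) ≠ 0 := ht0
    rw [slope_def_field]
    simp only [sub_zero, zero_smul, add_zero]
    rw [div_eq_inv_mul, abs_mul, abs_inv]
    calc |t|⁻¹ * |f (x + t • p) - f x| ≤ |t|⁻¹ * (|t| * ‖mulVecE L p‖) :=
          mul_le_mul_of_nonneg_left hlip (by positivity)
      _ = ‖mulVecE L p‖ := by field_simp
  have htend : Filter.Tendsto (fun t => |slope (fun t : ℝ => f (x + t • p)) 0 t|)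
      (nhdsWithin 0 {(0:ℝ)}ᶜ) (nhds |⟪p, g⟫|) :=
    ((hasDerivAt_iff_tendsto_slope.mp hφ).abs)
  exact le_of_tendsto htend hslope

/-- The quadratic form of `LᵀL` is the squared norm of `L p`. -/
lemma inner_mulVecE_transpose_mul {m : ℕ} (L : Matrix (Fin m) (Fin m) ℝ)
    (p : EuclideanSpace ℝ (Fin m)) :
    ⟪p, mulVecE (Lᵀ * L) p⟫ = ‖mulVecE L p‖ ^ 2 := by
  have hstar : Lᵀ = star L := by
    ext i j; simp [Matrix.star_apply]
  have : (toEuclideanCLM (n := Fin m) (𝕜 := ℝ) (Lᵀ * L)) =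
      star (toEuclideanCLM (n := Fin m) (𝕜 := ℝ) L) * toEuclideanCLM (n := Fin m) (𝕜 := ℝ) L := by
    rw [hstar, _root_.map_mul, map_star]
  simp only [mulVecE, this, ContinuousLinearMap.mul_apply, ContinuousLinearMap.star_eq_adjoint,
    ContinuousLinearMap.adjoint_inner_right]
  rw [real_inner_self_eq_norm_sq]

/-- if `f ∈ 𝓛(D, L)` is differentiable at an interior point `x` of `D` with
gradient `g`, then `(pᵀ g)² ≤ pᵀ (LᵀL) p` for every `p`; equivalently `LᵀL - g gᵀ` is
positive semidefinite. -/
theorem gradient_outer_le_squared_lipschitz {m : ℕ} (D : Set (EuclideanSpace ℝ (Fin m)))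
    (L : Matrix (Fin m) (Fin m) ℝ) (f : EuclideanSpace ℝ (Fin m) → ℝ)
    (hf : MemLip D L f) (x : EuclideanSpace ℝ (Fin m)) (hx : x ∈ interior D)
    (g : EuclideanSpace ℝ (Fin m)) (hg : HasGradientAt f g x) :
    (∀ p : EuclideanSpace ℝ (Fin m), ⟪p, g⟫ ^ 2 ≤ ⟪p, mulVecE (Lᵀ * L) p⟫) ∧
      (Lᵀ * L -
        Matrix.vecMulVec (WithLp.equiv 2 (Fin m → ℝ) g)
          (WithLp.equiv 2 (Fin m → ℝ) g)).PosSemidef := by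
  have key : ∀ p : EuclideanSpace ℝ (Fin m), ⟪p, g⟫ ^ 2 ≤ ⟪p, mulVecE (Lᵀ * L) p⟫ := by
    intro p
    rw [inner_mulVecE_transpose_mul]
    calc ⟪p, g⟫ ^ 2 = |⟪p, g⟫| ^ 2 := (sq_abs _).symm
      _ ≤ ‖mulVecE L p‖ ^ 2 :=
        pow_le_pow_left₀ (abs_nonneg _) (dir_bound_aux D L f hf x hx g hg p) 2
  refine ⟨key, Matrix.PosSemidef.of_dotProduct_mulVec_nonneg ?_ ?_⟩
  · apply Matrix.IsHermitian.sub
    · have h : Lᵀ = Lᴴ := by ext i j; simp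
      rw [h]; exact isHermitian_conjTranspose_mul_self L
    · unfold Matrix.IsHermitian
      ext i j; simp [vecMulVec_apply, mul_comm]
  · intro v
    set g' := WithLp.equiv 2 (Fin m → ℝ) g
    set p : EuclideanSpace ℝ (Fin m) := (WithLp.equiv 2 (Fin m → ℝ)).symm v
    have h1 : ⟪p, mulVecE (Lᵀ * L) p⟫ = v ⬝ᵥ ((Lᵀ * L) *ᵥ v) := by
      simp [p, mulVecE, PiLp.inner_apply, toEuclideanCLM_toLp, dotProduct, mulVec, mul_comm]
    have h2 : ⟪p, g⟫ = v ⬝ᵥ g' := by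
      simp [p, g', PiLp.inner_apply, dotProduct, mul_comm]
    have h3 : v ⬝ᵥ (vecMulVec g' g' *ᵥ v) = (v ⬝ᵥ g') ^ 2 := by
      simp only [mulVec, dotProduct, vecMulVec_apply, Finset.mul_sum, sq, Finset.sum_mul]
      rw [Finset.sum_comm]
      congr 1; ext i; congr 1; ext j; ring
    have hkey := key p
    rw [h1, h2] at hkey
    have : star v = v := by simp
    rw [this, Matrix.sub_mulVec, dotProduct_sub, h3]
    rw [sub_nonneg]
    exact hkey
end

section
/- Let D ⊆ ℝ^m, let L ∈ ℝ^{m×m}, and let (x̂_j, y_j), j = 1,…,M, be data with x̂_j ∈ D that are consistent with L, i.e. |y_i − y_j| ≤ ‖L(x̂_i − x̂_j)‖₂ for all i, j. Then the central approximation f̄(x) := ½ (max_{j} (y_j − ‖L(x − x̂_j)‖₂)) + ½ (min_{j} (y_j + ‖L(x − x̂_j)‖₂)) belongs to the Lipschitz-matrix class 𝓛(D, L) and interpolates the data: f̄(x̂_j) = y_j for each j = 1,…,M. -/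
/-!
The central approximation factors as `g ∘ L`, where `g` is the midpoint of the lower and upper
McShane–Whitney envelopes of the data `(L x̂_j, y_j)` in Euclidean space. Each cone
`y_j ∓ ‖· − L x̂_j‖` is 1-Lipschitz, hence so are their finite max and min and the average `g`;
and `‖L(x₁ − x₂)‖ = ‖L x₁ − L x₂‖` turns this into membership in `𝓛(D, L)`. Consistency of the
data says exactly that every cone through `(L x̂_i, y_i)` lies below (resp. above) `y_j` at
`L x̂_j`, so both envelopes equal `y_j` there.
-/

open Matrix

/-- The lower envelope `f₋(x) = max_j (y_j - ‖L(x - x̂_j)‖₂)` determined by data `(x̂_j, y_j)`. -/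
noncomputable def lowerEnv {m M : ℕ} (L : Matrix (Fin m) (Fin m) ℝ)
    (xh : Fin M → EuclideanSpace ℝ (Fin m)) (y : Fin M → ℝ)
    (x : EuclideanSpace ℝ (Fin m)) : ℝ :=
  ⨆ j, (y j - ‖mulVecE L (x - xh j)‖)

/-- The upper envelope `f₊(x) = min_j (y_j + ‖L(x - x̂_j)‖₂)` determined by data `(x̂_j, y_j)`. -/
noncomputable def upperEnv {m M : ℕ} (L : Matrix (Fin m) (Fin m) ℝ)
    (xh : Fin M → EuclideanSpace ℝ (Fin m)) (y : Fin M → ℝ)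
    (x : EuclideanSpace ℝ (Fin m)) : ℝ :=
  ⨅ j, (y j + ‖mulVecE L (x - xh j)‖)

/-- The central approximation `f̄ = (f₋ + f₊)/2`. -/
noncomputable def centralApprox {m M : ℕ} (L : Matrix (Fin m) (Fin m) ℝ)
    (xh : Fin M → EuclideanSpace ℝ (Fin m)) (y : Fin M → ℝ)
    (x : EuclideanSpace ℝ (Fin m)) : ℝ :=
  (lowerEnv L xh y x + upperEnv L xh y x) / 2

open scoped NNReal

namespace LipschitzWith

variable {α ι : Type*} [PseudoMetricSpace α] [Finite ι] {K : ℝ≥0} {f : ι → α → ℝ}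

protected theorem ciSup (hf : ∀ i, LipschitzWith K (f i)) :
    LipschitzWith K fun x => ⨆ i, f i x := by
  cases isEmpty_or_nonempty ι
  · simpa only [Real.iSup_of_isEmpty] using (LipschitzWith.const 0).weaken zero_le
  refine .of_le_add_mul K fun x z => ciSup_le fun i => ?_
  calc f i x ≤ f i z + K * dist x z := (hf i).le_add_mul x z
    _ ≤ (⨆ i, f i z) + K * dist x z := by
      gcongr
      exact le_ciSup (f := fun i => f i z) (Set.finite_range _).bddAbove i

protected theorem ciInf (hf : ∀ i, LipschitzWith K (f i)) :
    LipschitzWith K fun x => ⨅ i, f i x := by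
  cases isEmpty_or_nonempty ι
  · simpa only [Real.iInf_of_isEmpty] using (LipschitzWith.const 0).weaken zero_le
  refine .of_le_add_mul K fun x z => ?_
  rw [← sub_le_iff_le_add]
  refine le_ciInf fun i => sub_le_iff_le_add.2 ?_
  calc (⨅ i, f i x) ≤ f i x := ciInf_le (Set.finite_range _).bddBelow i
    _ ≤ f i z + K * dist x z := (hf i).le_add_mul x z

end LipschitzWith

section CentralInterpolant

variable {α ι : Type*} [PseudoMetricSpace α] (p : ι → α) (y : ι → ℝ)

noncomputable def centralInterpolant (x : α) : ℝ :=
  ((⨆ j, (y j - dist x (p j))) + ⨅ j, (y j + dist x (p j))) / 2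

theorem lipschitzWith_sub_dist (c : ℝ) (a : α) : LipschitzWith 1 fun x => c - dist x a :=
  .of_le_add fun x z => by linarith [dist_triangle z x a, dist_comm x z]

theorem lipschitzWith_add_dist (c : ℝ) (a : α) : LipschitzWith 1 fun x => c + dist x a :=
  .of_le_add fun x z => by linarith [dist_triangle x z a]

theorem lipschitzWith_centralInterpolant [Finite ι] : LipschitzWith 1 (centralInterpolant p y) := by
  have lower := LipschitzWith.ciSup fun j => lipschitzWith_sub_dist (y j) (p j)
  have upper := LipschitzWith.ciInf fun j => lipschitzWith_add_dist (y j) (p j)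
  refine .of_le_add fun x z => ?_
  have hl := lower.le_add_mul x z
  have hu := upper.le_add_mul x z
  simp only [NNReal.coe_one, one_mul] at hl hu
  simp only [centralInterpolant]
  linarith

variable {p y}

theorem ciSup_sub_dist_eq [Finite ι] (hcons : ∀ i j, |y i - y j| ≤ dist (p i) (p j)) (j : ι) :
    ⨆ i, (y i - dist (p j) (p i)) = y j := by
  have : Nonempty ι := ⟨j⟩
  refine le_antisymm (ciSup_le fun i => ?_) ?_
  · linarith [(abs_le.1 (hcons i j)).2, dist_comm (p i) (p j)]
  · exact le_ciSup_of_le (Set.finite_range _).bddAbove j (by simp)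

theorem ciInf_add_dist_eq [Finite ι] (hcons : ∀ i j, |y i - y j| ≤ dist (p i) (p j)) (j : ι) :
    ⨅ i, (y i + dist (p j) (p i)) = y j := by
  have : Nonempty ι := ⟨j⟩
  refine le_antisymm ?_ (le_ciInf fun i => ?_)
  · exact ciInf_le_of_le (Set.finite_range _).bddBelow j (by simp)
  · linarith [(abs_le.1 (hcons i j)).1, dist_comm (p i) (p j)]

theorem centralInterpolant_apply_node [Finite ι] (hcons : ∀ i j, |y i - y j| ≤ dist (p i) (p j))
    (j : ι) : centralInterpolant p y (p j) = y j := by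
  rw [centralInterpolant, ciSup_sub_dist_eq hcons, ciInf_add_dist_eq hcons, add_self_div_two]

end CentralInterpolant

theorem dist_mulVecE {m : ℕ} (L : Matrix (Fin m) (Fin m) ℝ) (a b : EuclideanSpace ℝ (Fin m)) :
    dist (mulVecE L a) (mulVecE L b) = ‖mulVecE L (a - b)‖ := by
  rw [dist_eq_norm, mulVecE, mulVecE, mulVecE, map_sub]

theorem memLip_comp_mulVecE {m : ℕ} (D : Set (EuclideanSpace ℝ (Fin m)))
    (L : Matrix (Fin m) (Fin m) ℝ) {g : EuclideanSpace ℝ (Fin m) → ℝ} (hg : LipschitzWith 1 g) :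
    MemLip D L (g ∘ mulVecE L) := fun x₁ _ x₂ _ => by
  simpa [← Real.dist_eq, dist_mulVecE] using hg.dist_le_mul (mulVecE L x₁) (mulVecE L x₂)

theorem centralApprox_eq_centralInterpolant_comp {m M : ℕ} (L : Matrix (Fin m) (Fin m) ℝ)
    (xh : Fin M → EuclideanSpace ℝ (Fin m)) (y : Fin M → ℝ) :
    centralApprox L xh y = centralInterpolant (fun j => mulVecE L (xh j)) y ∘ mulVecE L := by
  funext x
  simp only [centralApprox, lowerEnv, upperEnv, centralInterpolant, Function.comp_apply,
    dist_mulVecE]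

theorem centralApprox_mem_lip_and_interp_general {m M : ℕ}
    (D : Set (EuclideanSpace ℝ (Fin m))) (L : Matrix (Fin m) (Fin m) ℝ)
    (xh : Fin M → EuclideanSpace ℝ (Fin m)) (y : Fin M → ℝ)
    (hcons : ∀ i j, |y i - y j| ≤ ‖mulVecE L (xh i - xh j)‖) :
    MemLip D L (centralApprox L xh y) ∧ ∀ j, centralApprox L xh y (xh j) = y j := by
  rw [centralApprox_eq_centralInterpolant_comp]
  refine ⟨memLip_comp_mulVecE D L (lipschitzWith_centralInterpolant _ y), fun j => ?_⟩
  simp_rw [← dist_mulVecE] at hcons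
  exact centralInterpolant_apply_node hcons j

/-- for data consistent with `L`, the central approximation belongs to `𝓛(D, L)`
and interpolates the data. -/
theorem centralApprox_mem_lip_and_interp {m M : ℕ} (hM : 0 < M)
    (D : Set (EuclideanSpace ℝ (Fin m))) (L : Matrix (Fin m) (Fin m) ℝ)
    (xh : Fin M → EuclideanSpace ℝ (Fin m)) (y : Fin M → ℝ)
    (hx : ∀ j, xh j ∈ D)
    (hcons : ∀ i j, |y i - y j| ≤ ‖mulVecE L (xh i - xh j)‖) :
    MemLip D L (centralApprox L xh y) ∧ ∀ j, centralApprox L xh y (xh j) = y j :=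
  centralApprox_mem_lip_and_interp_general D L xh y hcons
end

section
/- Let D ⊆ ℝ^m, let L ∈ ℝ^{m×m}, and let (x̂_j, y_j), j = 1,…,M, be data with x̂_j ∈ D that are consistent with L. Let f̄ be the central approximation f̄(x) := ½ (max_j (y_j − ‖L(x − x̂_j)‖₂)) + ½ (min_j (y_j + ‖L(x − x̂_j)‖₂)). Then for every x ∈ D and every function f̃ : D → ℝ with f̃(x̂_j) = y_j for all j, sup{ |f(x) − f̄(x)| : f ∈ 𝓛(D, L), f(x̂_j) = y_j ∀j } ≤ sup{ |f(x) − f̃(x)| : f ∈ 𝓛(D, L), f(x̂_j) = y_j ∀j }; i.e., the central approximation pointwise minimizes the worst-case error among all interpolants of the data. -/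
open Matrix

theorem sSup_abs_sub_midpoint_le {ι : Type*} {P : ι → Prop} {g : ι → ℝ} {a b : ℝ}
    (hg : ∀ i, P i → a ≤ g i ∧ g i ≤ b) (ha : ∃ i, P i ∧ g i = a) (hb : ∃ i, P i ∧ g i = b)
    (t : ℝ) :
    sSup {e | ∃ i, P i ∧ e = |g i - (a + b) / 2|} ≤ sSup {e | ∃ i, P i ∧ e = |g i - t|} := by
  obtain ⟨i, hi, rfl⟩ := ha
  obtain ⟨k, hk, rfl⟩ := hb
  have hbdd : BddAbove {e | ∃ i, P i ∧ e = |g i - t|} := by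
    refine ⟨max |g i - t| |g k - t|, ?_⟩
    rintro e ⟨j, hj, rfl⟩
    exact abs_le_max_abs_abs (by linarith [hg j hj]) (by linarith [hg j hj])
  have hradius : (g k - g i) / 2 ≤ sSup {e | ∃ i, P i ∧ e = |g i - t|} := by
    have hi' := le_csSup hbdd ⟨i, hi, rfl⟩
    have hk' := le_csSup hbdd ⟨k, hk, rfl⟩
    linarith [le_abs_self (g k - t), neg_abs_le (g i - t)]
  refine le_trans (csSup_le ⟨_, i, hi, rfl⟩ ?_) hradius
  rintro e ⟨j, hj, rfl⟩
  rw [abs_le]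
  constructor <;> linarith [hg j hj]

section Envelopes

variable {m M : ℕ} (L : Matrix (Fin m) (Fin m) ℝ)

def DataConsistent (xh : Fin M → EuclideanSpace ℝ (Fin m)) (y : Fin M → ℝ) : Prop :=
  ∀ i j, |y i - y j| ≤ ‖mulVecE L (xh i - xh j)‖

theorem norm_mulVecE_sub_comm (a b : EuclideanSpace ℝ (Fin m)) :
    ‖mulVecE L (a - b)‖ = ‖mulVecE L (b - a)‖ := by
  rw [← neg_sub, mulVecE, map_neg, norm_neg, mulVecE]

theorem norm_mulVecE_sub_le (a b c : EuclideanSpace ℝ (Fin m)) :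
    ‖mulVecE L (a - c)‖ ≤ ‖mulVecE L (a - b)‖ + ‖mulVecE L (b - c)‖ := by
  rw [← sub_add_sub_cancel a b c, mulVecE, map_add]
  exact norm_add_le _ _

theorem norm_mulVecE_sub_self (a : EuclideanSpace ℝ (Fin m)) : ‖mulVecE L (a - a)‖ = 0 := by
  rw [sub_self, mulVecE, map_zero, norm_zero]

variable (xh : Fin M → EuclideanSpace ℝ (Fin m)) (y : Fin M → ℝ)

theorem upperEnv_eq_neg_lowerEnv_neg : upperEnv L xh y = -lowerEnv L xh (-y) := by
  funext x
  rw [Pi.neg_apply, lowerEnv, neg_eq_neg_one_mul, Real.mul_iSup_of_nonpos (by norm_num)]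
  simp only [upperEnv, Pi.neg_apply]
  congr 1; funext j; ring

theorem sub_norm_le_lowerEnv (x : EuclideanSpace ℝ (Fin m)) (j : Fin M) :
    y j - ‖mulVecE L (x - xh j)‖ ≤ lowerEnv L xh y x :=
  le_ciSup (Set.finite_range fun j ↦ y j - ‖mulVecE L (x - xh j)‖).bddAbove j

theorem lowerEnv_le_add [Nonempty (Fin M)] (x₁ x₂ : EuclideanSpace ℝ (Fin m)) :
    lowerEnv L xh y x₂ ≤ lowerEnv L xh y x₁ + ‖mulVecE L (x₁ - x₂)‖ :=
  ciSup_le fun j ↦ by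
    linarith [sub_norm_le_lowerEnv L xh y x₁ j, norm_mulVecE_sub_le L x₁ x₂ (xh j)]

variable {L xh y} {D : Set (EuclideanSpace ℝ (Fin m))}

theorem MemLip.neg {f : EuclideanSpace ℝ (Fin m) → ℝ} (hf : MemLip D L f) : MemLip D L (-f) :=
  fun x₁ h₁ x₂ h₂ ↦ by simpa only [Pi.neg_apply, neg_sub_neg, abs_sub_comm] using hf x₁ h₁ x₂ h₂

theorem DataConsistent.neg (h : DataConsistent L xh y) : DataConsistent L xh (-y) :=
  fun i j ↦ by simpa only [Pi.neg_apply, neg_sub_neg, abs_sub_comm] using h i j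

theorem lowerEnv_apply_of_consistent (hcons : DataConsistent L xh y) (i : Fin M) :
    lowerEnv L xh y (xh i) = y i := by
  have : Nonempty (Fin M) := ⟨i⟩
  refine le_antisymm (ciSup_le fun j ↦ ?_) ?_
  · linarith [(abs_le.mp (hcons j i)).2, norm_mulVecE_sub_comm L (xh i) (xh j)]
  · simpa only [norm_mulVecE_sub_self, sub_zero] using sub_norm_le_lowerEnv L xh y (xh i) i

theorem upperEnv_apply_of_consistent (hcons : DataConsistent L xh y) (i : Fin M) :
    upperEnv L xh y (xh i) = y i := by
  rw [upperEnv_eq_neg_lowerEnv_neg, Pi.neg_apply, lowerEnv_apply_of_consistent hcons.neg,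
    Pi.neg_apply, neg_neg]

variable [Nonempty (Fin M)]

theorem memLip_lowerEnv : MemLip D L (lowerEnv L xh y) := by
  intro x₁ _ x₂ _
  rw [abs_sub_le_iff]
  constructor
  · linarith [lowerEnv_le_add L xh y x₂ x₁, norm_mulVecE_sub_comm L x₁ x₂]
  · linarith [lowerEnv_le_add L xh y x₁ x₂]

theorem memLip_upperEnv : MemLip D L (upperEnv L xh y) := by
  rw [upperEnv_eq_neg_lowerEnv_neg]
  exact memLip_lowerEnv.neg

theorem lowerEnv_le_of_memLip {f : EuclideanSpace ℝ (Fin m) → ℝ} (hf : MemLip D L f)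
    (hfy : ∀ j, f (xh j) = y j) (hxh : ∀ j, xh j ∈ D) {x : EuclideanSpace ℝ (Fin m)}
    (hx : x ∈ D) : lowerEnv L xh y x ≤ f x :=
  ciSup_le fun j ↦ by linarith [hfy j, (abs_le.mp (hf x hx (xh j) (hxh j))).1]

theorem le_upperEnv_of_memLip {f : EuclideanSpace ℝ (Fin m) → ℝ} (hf : MemLip D L f)
    (hfy : ∀ j, f (xh j) = y j) (hxh : ∀ j, xh j ∈ D) {x : EuclideanSpace ℝ (Fin m)}
    (hx : x ∈ D) : f x ≤ upperEnv L xh y x := by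
  have := lowerEnv_le_of_memLip (y := -y) hf.neg (fun j ↦ by simp only [Pi.neg_apply, hfy j])
    hxh hx
  rw [upperEnv_eq_neg_lowerEnv_neg, Pi.neg_apply]
  simpa only [Pi.neg_apply, le_neg] using this

end Envelopes

theorem centralApprox_minimizes_worst_case_general {m M : ℕ} (hM : 0 < M)
    (D : Set (EuclideanSpace ℝ (Fin m))) (L : Matrix (Fin m) (Fin m) ℝ)
    (xh : Fin M → EuclideanSpace ℝ (Fin m)) (y : Fin M → ℝ)
    (hx : ∀ j, xh j ∈ D)
    (hcons : ∀ i j, |y i - y j| ≤ ‖mulVecE L (xh i - xh j)‖)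
    (x : EuclideanSpace ℝ (Fin m)) (hxD : x ∈ D)
    (ft : EuclideanSpace ℝ (Fin m) → ℝ) :
    sSup {e : ℝ | ∃ f : EuclideanSpace ℝ (Fin m) → ℝ,
        MemLip D L f ∧ (∀ j, f (xh j) = y j) ∧ e = |f x - centralApprox L xh y x|}
      ≤ sSup {e : ℝ | ∃ f : EuclideanSpace ℝ (Fin m) → ℝ,
        MemLip D L f ∧ (∀ j, f (xh j) = y j) ∧ e = |f x - ft x|} := by
  have : Nonempty (Fin M) := ⟨⟨0, hM⟩⟩
  have hbounds : ∀ f : EuclideanSpace ℝ (Fin m) → ℝ, MemLip D L f ∧ (∀ j, f (xh j) = y j) →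
      lowerEnv L xh y x ≤ f x ∧ f x ≤ upperEnv L xh y x := fun f ⟨hf, hfy⟩ ↦
    ⟨lowerEnv_le_of_memLip hf hfy hx hxD, le_upperEnv_of_memLip hf hfy hx hxD⟩
  simpa only [centralApprox, and_assoc] using
    sSup_abs_sub_midpoint_le hbounds
      ⟨_, ⟨memLip_lowerEnv, lowerEnv_apply_of_consistent hcons⟩, rfl⟩
      ⟨_, ⟨memLip_upperEnv, upperEnv_apply_of_consistent hcons⟩, rfl⟩ (ft x)

/-- the central approximation pointwise minimizes the worst-case error among all
interpolants of the data. -/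
theorem centralApprox_minimizes_worst_case {m M : ℕ} (hM : 0 < M)
    (D : Set (EuclideanSpace ℝ (Fin m))) (L : Matrix (Fin m) (Fin m) ℝ)
    (xh : Fin M → EuclideanSpace ℝ (Fin m)) (y : Fin M → ℝ)
    (hx : ∀ j, xh j ∈ D)
    (hcons : ∀ i j, |y i - y j| ≤ ‖mulVecE L (xh i - xh j)‖)
    (x : EuclideanSpace ℝ (Fin m)) (hxD : x ∈ D)
    (ft : EuclideanSpace ℝ (Fin m) → ℝ) (hft : ∀ j, ft (xh j) = y j) :
    sSup {e : ℝ | ∃ f : EuclideanSpace ℝ (Fin m) → ℝ,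
        MemLip D L f ∧ (∀ j, f (xh j) = y j) ∧ e = |f x - centralApprox L xh y x|}
      ≤ sSup {e : ℝ | ∃ f : EuclideanSpace ℝ (Fin m) → ℝ,
        MemLip D L f ∧ (∀ j, f (xh j) = y j) ∧ e = |f x - ft x|} :=
  centralApprox_minimizes_worst_case_general hM D L xh y hx hcons x hxD ft
end
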